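/- If (A_i)_{i=0}^t is a supermartingale (E[A_{i+1} | F_i] ≤ A_i) with |A_{i+1} - A_i| ≤ b, and E is the event that there exists j > 0 with A_j ≥ A_0 + a and Σ_{i<j} Var[A_{i+1} | F_i] ≤ v, then P(E) ≤ exp(-a^2 / (2(v + ab))). -/

import Mathlib

/-!
For `0 ≤ λ` with `λ b ≤ 1`, a third-order Taylor bound gives
`exp (λ d) ≤ 1 + λ d + c d²` for `|d| ≤ b`, where `c = λ²/2 + (2/9) λ³ b`. Taking conditional
expectations and using `E[ΔA_i | F_i] ≤ 0`, the process
`G_n = exp (λ (A_n - A_0) - c ∑_{i<n} E[ΔA_i² | F_i])` is a nonnegative supermartingale with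
`G_0 = 1`. On the event in question some `G_j` with `j ≤ t` is at least `exp (λ a - c v)`, so the
maximal inequality for nonnegative supermartingales (optional stopping at the first such time)
bounds its probability by `exp (-(λ a - c v))`; the choice `λ = a / (v + a b)` makes
`λ a - c v ≥ a² / (2 (v + a b))`.
-/

open MeasureTheory Finset Real

namespace Real

-- `2 / 9 = 4 / (3! * 3)` is the remainder constant of `Real.exp_bound` at order three.
lemma exp_le_one_add_add_sq_div_two_add_abs_pow_three {x : ℝ} (hx : |x| ≤ 1) :
    exp x ≤ 1 + x + x ^ 2 / 2 + 2 / 9 * |x| ^ 3 := by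
  have h := (abs_sub_le_iff.1 (exp_bound hx (n := 3) (by norm_num))).1
  norm_num [Finset.sum_range_succ, Nat.factorial] at h
  linarith

lemma norm_exp_mul_le_of_abs_le {l b d : ℝ} (hl : 0 ≤ l) (hd : |d| ≤ b) :
    ‖exp (l * d)‖ ≤ exp (l * b) := by
  rw [norm_of_nonneg (exp_pos _).le, exp_le_exp]
  exact mul_le_mul_of_nonneg_left ((le_abs_self _).trans hd) hl

lemma exp_neg_mul_one_add_le_one (x : ℝ) : exp (-x) * (1 + x) ≤ 1 := by
  calc exp (-x) * (1 + x) ≤ exp (-x) * exp x := by gcongr; linarith [add_one_le_exp x]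
    _ = 1 := by rw [← exp_add, neg_add_cancel, exp_zero]

end Real

noncomputable def freedmanCoeff (l b : ℝ) : ℝ := l ^ 2 / 2 + 2 / 9 * l ^ 3 * b

lemma freedmanCoeff_nonneg {l b : ℝ} (hl : 0 ≤ l) (hb : 0 ≤ b) : 0 ≤ freedmanCoeff l b := by
  unfold freedmanCoeff; positivity

lemma exp_mul_le_one_add_add_freedmanCoeff_mul_sq {l b d : ℝ} (hl : 0 ≤ l) (hlb : l * b ≤ 1)
    (hd : |d| ≤ b) : exp (l * d) ≤ 1 + l * d + freedmanCoeff l b * d ^ 2 := by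
  have hld : |l * d| ≤ 1 := by
    rw [abs_mul, abs_of_nonneg hl]
    nlinarith [abs_nonneg d]
  have hcube : |l * d| ^ 3 ≤ l ^ 3 * b * d ^ 2 := by
    rw [abs_mul, abs_of_nonneg hl, mul_pow, ← sq_abs d]
    linear_combination mul_le_mul_of_nonneg_left hd (by positivity : 0 ≤ l ^ 3 * |d| ^ 2)
  have := exp_le_one_add_add_sq_div_two_add_abs_pow_three hld
  unfold freedmanCoeff
  nlinarith

lemma sq_div_le_mul_sub_freedmanCoeff_mul {a b v : ℝ} (ha : 0 < a) (hb : 0 < b) (hv : 0 ≤ v) :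
    a ^ 2 / (2 * (v + a * b)) ≤
      a / (v + a * b) * a - freedmanCoeff (a / (v + a * b)) b * v := by
  have hs : 0 < v + a * b := by positivity
  unfold freedmanCoeff
  rw [div_le_iff₀ (by positivity)]
  field_simp
  nlinarith [mul_nonneg (mul_nonneg ha.le hb.le) hv, mul_pos ha hb, pow_pos hs 3]

namespace MeasureTheory

variable {Ω : Type*} {m m0 : MeasurableSpace Ω} {μ : Measure Ω}

lemma integrable_exp_mul_of_abs_le [IsFiniteMeasure μ] {D : Ω → ℝ} {l b : ℝ}
    (hD : AEStronglyMeasurable D μ) (hDb : ∀ ω, |D ω| ≤ b) (hl : 0 ≤ l) :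
    Integrable (fun ω => exp (l * D ω)) μ :=
  .of_bound (by fun_prop) _ (ae_of_all _ fun ω => norm_exp_mul_le_of_abs_le hl (hDb ω))

lemma condExp_exp_mul_le [IsFiniteMeasure μ] (hm : m ≤ m0) {D : Ω → ℝ} {l b : ℝ}
    (hD : Integrable D μ) (hDb : ∀ ω, |D ω| ≤ b) (hDm : μ[D | m] ≤ᵐ[μ] 0)
    (hl : 0 ≤ l) (hlb : l * b ≤ 1) :
    μ[fun ω => exp (l * D ω) | m] ≤ᵐ[μ]
      fun ω => 1 + freedmanCoeff l b * μ[fun ω => D ω ^ 2 | m] ω := by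
  have hD2 : Integrable (fun ω => D ω ^ 2) μ := by
    refine .of_bound (hD.aestronglyMeasurable.pow 2) (b ^ 2) (ae_of_all _ fun ω => ?_)
    simpa [abs_pow] using pow_le_pow_left₀ (abs_nonneg _) (hDb ω) 2
  have hexp := integrable_exp_mul_of_abs_le hD.aestronglyMeasurable hDb hl
  have hquad : Integrable (fun ω => 1 + l * D ω + freedmanCoeff l b * D ω ^ 2) μ :=
    ((integrable_const 1).add (hD.const_mul l)).add (hD2.const_mul _)
  have hmono := condExp_mono (m := m) hexp hquad
    (ae_of_all _ fun ω => exp_mul_le_one_add_add_freedmanCoeff_mul_sq hl hlb (hDb ω))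
  have hlin : μ[fun ω => 1 + l * D ω + freedmanCoeff l b * D ω ^ 2 | m] =ᵐ[μ]
      fun ω => 1 + l * μ[D | m] ω + freedmanCoeff l b * μ[fun ω => D ω ^ 2 | m] ω := by
    filter_upwards [condExp_add ((integrable_const 1).add (hD.const_mul l))
        (hD2.const_mul (freedmanCoeff l b)) m,
      condExp_add (integrable_const (1 : ℝ)) (hD.const_mul l) m, condExp_smul (μ := μ) l D m,
      condExp_smul (μ := μ) (freedmanCoeff l b) (fun ω => D ω ^ 2) m] with ω h1 h2 h3 h4
    refine h1.trans ?_
    simp only [Pi.add_apply] at h2 ⊢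
    rw [h2, condExp_const hm]
    exact congr_arg₂ _ (congr_arg _ h3) h4
  filter_upwards [hmono, hlin, hDm] with ω h1 h2 h3
  rw [h2] at h1
  nlinarith [mul_nonpos_of_nonneg_of_nonpos hl h3]

theorem Supermartingale.condExp_sub_nonpos {F : Filtration ℕ m0} {f : ℕ → Ω → ℝ}
    (hf : Supermartingale f F μ) {i j : ℕ} (hij : i ≤ j) : μ[f j - f i | F i] ≤ᵐ[μ] 0 := by
  filter_upwards [hf.neg.condExp_sub_nonneg hij, condExp_neg (μ := μ) (f j - f i) (F i)]
    with ω h1 h2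
  rw [Pi.neg_apply, Pi.neg_apply, neg_sub_neg, ← neg_sub, h2] at h1
  simpa using h1

theorem Supermartingale.mul_measureReal_exists_le_le [IsFiniteMeasure μ]
    {F : Filtration ℕ m0} {f : ℕ → Ω → ℝ} (hf : Supermartingale f F μ) (hnonneg : 0 ≤ f)
    {ε : ℝ} (hε : 0 ≤ ε) (n : ℕ) :
    ε * μ.real {ω | ∃ k ≤ n, ε ≤ f k ω} ≤ ∫ ω, f 0 ω ∂μ := by
  set τ : Ω → ℕ∞ := fun ω => (hittingBtwn f (Set.Ici ε) 0 n ω : ℕ)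
  have hτ : IsStoppingTime F τ :=
    hf.stronglyAdapted.adapted.isStoppingTime_hittingBtwn measurableSet_Ici
  have hτn : ∀ ω, τ ω ≤ n := fun ω => by simpa [τ] using hittingBtwn_le (m := n) ω
  have hstop : ∫ ω, stoppedValue f τ ω ∂μ ≤ ∫ ω, f 0 ω ∂μ := by
    simpa [stoppedValue, integral_neg] using
      hf.neg.expected_stoppedValue_mono (isStoppingTime_const F 0) hτ (fun ω => zero_le) hτn
  have hsub : {ω | ∃ k ≤ n, ε ≤ f k ω} ⊆ {ω | ε ≤ stoppedValue f τ ω} := by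
    rintro ω ⟨k, hkn, hk⟩
    exact stoppedValue_hittingBtwn_mem ⟨k, ⟨zero_le, hkn⟩, hk⟩
  calc ε * μ.real {ω | ∃ k ≤ n, ε ≤ f k ω}
      ≤ ε * μ.real {ω | ε ≤ stoppedValue f τ ω} := by gcongr; finiteness
    _ ≤ ∫ ω, stoppedValue f τ ω ∂μ :=
        mul_meas_ge_le_integral_of_nonneg (ae_of_all _ fun ω => hnonneg _ _)
          (integrable_stoppedValue ℕ hτ hf.integrable hτn) ε
    _ ≤ ∫ ω, f 0 ω ∂μ := hstop

section FreedmanProcess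

variable (μ) (F : Filtration ℕ m0) (A : ℕ → Ω → ℝ)

noncomputable def condSqIncrSum (n : ℕ) : Ω → ℝ :=
  ∑ i ∈ range n, μ[fun ω => (A (i + 1) ω - A i ω) ^ 2 | F i]

noncomputable def freedmanProcess (l b : ℝ) (n : ℕ) (ω : Ω) : ℝ :=
  exp (l * (A n ω - A 0 ω) - freedmanCoeff l b * condSqIncrSum μ F A n ω)

lemma stronglyAdapted_condSqIncrSum : StronglyAdapted F (condSqIncrSum μ F A) := fun _ =>
  Finset.stronglyMeasurable_sum _ fun _ hi =>
    stronglyMeasurable_condExp.mono (F.mono (mem_range.1 hi).le)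

variable {μ F A}

lemma freedmanProcess_pos (l b : ℝ) (n : ℕ) (ω : Ω) : 0 < freedmanProcess μ F A l b n ω :=
  exp_pos _

lemma StronglyAdapted.freedmanProcess (hA : StronglyAdapted F A) (l b : ℝ) :
    StronglyAdapted F (freedmanProcess μ F A l b) := fun n =>
  continuous_exp.comp_stronglyMeasurable <|
    (stronglyMeasurable_const.mul ((hA n).sub ((hA 0).mono (F.mono (Nat.zero_le n))))).sub
      (stronglyMeasurable_const.mul (stronglyAdapted_condSqIncrSum μ F A n))

lemma freedmanProcess_zero (l b : ℝ) : freedmanProcess μ F A l b 0 = 1 := by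
  ext ω; simp [freedmanProcess, condSqIncrSum]

lemma freedmanProcess_succ (l b : ℝ) (n : ℕ) :
    freedmanProcess μ F A l b (n + 1) = freedmanProcess μ F A l b n *
      (fun ω => exp (-(freedmanCoeff l b * μ[fun ω => (A (n + 1) ω - A n ω) ^ 2 | F n] ω))) *
        fun ω => exp (l * (A (n + 1) ω - A n ω)) := by
  ext ω
  simp only [freedmanProcess, condSqIncrSum, sum_range_succ, Pi.add_apply, Pi.mul_apply, ← exp_add]
  ring_nf

lemma stronglyMeasurable_exp_neg_freedmanCoeff_mul (l b : ℝ) (n : ℕ) :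
    StronglyMeasurable[F n]
      fun ω => exp (-(freedmanCoeff l b * μ[fun ω => (A (n + 1) ω - A n ω) ^ 2 | F n] ω)) :=
  continuous_exp.comp_stronglyMeasurable
    (stronglyMeasurable_const.mul stronglyMeasurable_condExp).neg

lemma integrable_freedmanProcess [IsFiniteMeasure μ] (hA : StronglyAdapted F A) {l b : ℝ}
    (hbdd : ∀ i ω, |A (i + 1) ω - A i ω| ≤ b) (hl : 0 ≤ l) (hb : 0 ≤ b) (n : ℕ) :
    Integrable (freedmanProcess μ F A l b n) μ := by
  induction n with
  | zero => rw [freedmanProcess_zero]; exact integrable_const _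
  | succ n ih =>
    have hAm : ∀ i, Measurable (A i) := fun i => ((hA i).mono (F.le i)).measurable
    have hdecay : ∀ᵐ ω ∂μ,
        ‖exp (-(freedmanCoeff l b * μ[fun ω => (A (n + 1) ω - A n ω) ^ 2 | F n] ω))‖ ≤ 1 := by
      filter_upwards [condExp_nonneg (m := F n)
        (ae_of_all μ fun ω => sq_nonneg (A (n + 1) ω - A n ω))] with ω hω
      rw [norm_of_nonneg (exp_pos _).le, exp_le_one_iff, neg_nonpos]
      exact mul_nonneg (freedmanCoeff_nonneg hl hb) hω
    rw [freedmanProcess_succ]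
    exact (ih.mul_bdd ((stronglyMeasurable_exp_neg_freedmanCoeff_mul l b n).mono
        (F.le n)).aestronglyMeasurable hdecay).mul_bdd (by fun_prop)
      (ae_of_all _ fun ω => norm_exp_mul_le_of_abs_le hl (hbdd n ω))

theorem Supermartingale.freedmanProcess [IsFiniteMeasure μ] (hA : Supermartingale A F μ)
    {l b : ℝ} (hbdd : ∀ i ω, |A (i + 1) ω - A i ω| ≤ b) (hl : 0 ≤ l) (hb : 0 ≤ b)
    (hlb : l * b ≤ 1) :
    Supermartingale (freedmanProcess μ F A l b) F μ := by
  have hint := integrable_freedmanProcess (μ := μ) hA.stronglyAdapted hbdd hl hb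
  refine supermartingale_nat (hA.stronglyAdapted.freedmanProcess l b) hint fun n => ?_
  have hΔ : Integrable (fun ω => A (n + 1) ω - A n ω) μ := (hA.integrable _).sub (hA.integrable n)
  have hpull := condExp_mul_of_stronglyMeasurable_left
    ((hA.stronglyAdapted.freedmanProcess l b n).mul
      (stronglyMeasurable_exp_neg_freedmanCoeff_mul l b n))
    (freedmanProcess_succ (μ := μ) l b n ▸ hint (n + 1))
    (integrable_exp_mul_of_abs_le hΔ.aestronglyMeasurable (hbdd n) hl)
  have hmgf := condExp_exp_mul_le (F.le n) hΔ (hbdd n) (hA.condExp_sub_nonpos n.le_succ) hl hlb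
  rw [freedmanProcess_succ]
  set G := MeasureTheory.freedmanProcess μ F A l b
  set c := freedmanCoeff l b
  set V := μ[fun ω => (A (n + 1) ω - A n ω) ^ 2 | F n]
  filter_upwards [hpull, hmgf] with ω h1 h2
  rw [h1]
  simp only [Pi.mul_apply] at h2 ⊢
  calc G n ω * exp (-(c * V ω)) * μ[fun ω => exp (l * (A (n + 1) ω - A n ω)) | F n] ω
      ≤ G n ω * exp (-(c * V ω)) * (1 + c * V ω) :=
        mul_le_mul_of_nonneg_left h2 (mul_pos (freedmanProcess_pos l b n ω) (exp_pos _)).le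
    _ = G n ω * (exp (-(c * V ω)) * (1 + c * V ω)) := by ring
    _ ≤ G n ω :=
        mul_le_of_le_one_right (freedmanProcess_pos l b n ω).le (exp_neg_mul_one_add_le_one _)

end FreedmanProcess

end MeasureTheory

/-- Freedman's inequality for supermartingales: if `(A_i)` is a
supermartingale with increments bounded by `b`, and `E` is the event that for some
`j > 0` we have `A_j ≥ A_0 + a` while `∑_{i<j} Var[A_{i+1} | F_i] ≤ v`, then
`P(E) ≤ exp(-a²/(2(v+ab)))`. -/
theorem stmt10 {Ω : Type*} {m0 : MeasurableSpace Ω} {μ : Measure Ω}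
    [IsProbabilityMeasure μ]
    (F : Filtration ℕ m0) (A : ℕ → Ω → ℝ) (t : ℕ) (a b v : ℝ)
    (ha : 0 < a) (hb : 0 < b) (hv : 0 < v)
    (hsuper : Supermartingale A F μ)
    (hbdd : ∀ i ω, |A (i + 1) ω - A i ω| ≤ b) :
    μ {ω | ∃ j, 0 < j ∧ j ≤ t ∧ A 0 ω + a ≤ A j ω ∧
        ∑ i ∈ Finset.range j,
          (μ[fun ω' => (A (i + 1) ω' - A i ω') ^ 2 | F i]) ω ≤ v}
      ≤ ENNReal.ofReal (Real.exp (-a ^ 2 / (2 * (v + a * b)))) := by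
  set l := a / (v + a * b)
  set c := freedmanCoeff l b
  have hl : 0 < l := by positivity
  have hlb : l * b ≤ 1 := by
    rw [div_mul_eq_mul_div, div_le_one (by positivity)]; nlinarith
  have hmax := (hsuper.freedmanProcess hbdd hl.le hb.le hlb).mul_measureReal_exists_le_le
    (fun n ω => (freedmanProcess_pos l b n ω).le) (exp_pos (l * a - c * v)).le t
  simp only [freedmanProcess_zero, Pi.one_apply, integral_const, probReal_univ, smul_eq_mul,
    mul_one] at hmax
  have hsub : {ω | ∃ j, 0 < j ∧ j ≤ t ∧ A 0 ω + a ≤ A j ω ∧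
      ∑ i ∈ Finset.range j, (μ[fun ω' => (A (i + 1) ω' - A i ω') ^ 2 | F i]) ω ≤ v} ⊆
      {ω | ∃ k ≤ t, exp (l * a - c * v) ≤ freedmanProcess μ F A l b k ω} := by
    rintro ω ⟨j, -, hjt, hA, hV⟩
    refine ⟨j, hjt, exp_le_exp.2 ?_⟩
    rw [condSqIncrSum, Finset.sum_apply]
    nlinarith [mul_le_mul_of_nonneg_left hV (freedmanCoeff_nonneg hl.le hb.le)]
  rw [← ofReal_measureReal]
  refine ENNReal.ofReal_le_ofReal ((measureReal_mono hsub).trans ?_)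
  calc _ ≤ exp (-(l * a - c * v)) := by
        rw [exp_neg, ← one_div, le_div_iff₀ (exp_pos _)]; linarith
    _ ≤ exp (-a ^ 2 / (2 * (v + a * b))) := by
        rw [exp_le_exp, neg_div, neg_le_neg_iff]
        exact sq_div_le_mul_sub_freedmanCoeff_mul ha hb hv.le
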